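/- arXiv:2407.16635 — 2 statements merged into one kernel-verified Lean document; each statement's English description precedes it below -/
import Mathlib

section
/- The F₄ singularity f : (ℂ²,0) → (ℂ³,0), f(x,y) = (x, y², y⁵ + x³y), has ramification ideal equal to the ideal ⟨x³, y⟩ of ℂ{x,y}, and this ideal is not principal. Hence f is not a frontal map germ. -/
open MvPolynomial

/-- The 2×2 minor of the Jacobian of `f = (f₀,f₁,f₂) : (ℂ²,0) → (ℂ³,0)` obtained from the
columns of `f a` and `f b` (rows are ∂/∂x and ∂/∂y). -/
noncomputable def jacMinor (f : Fin 3 → MvPolynomial (Fin 2) ℂ) (a b : Fin 3) :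
    MvPolynomial (Fin 2) ℂ :=
  pderiv 0 (f a) * pderiv 1 (f b) - pderiv 0 (f b) * pderiv 1 (f a)

/-- The ramification ideal of `f`, as an ideal of the local ring of germs
(modelled by formal power series `ℂ⟦x,y⟧`): the ideal generated by the three
2×2 minors of the Jacobian of `f`. -/
noncomputable def ramIdeal (f : Fin 3 → MvPolynomial (Fin 2) ℂ) :
    Ideal (MvPowerSeries (Fin 2) ℂ) :=
  Ideal.span {(jacMinor f 0 1 : MvPowerSeries (Fin 2) ℂ),
    (jacMinor f 0 2 : MvPowerSeries (Fin 2) ℂ), (jacMinor f 1 2 : MvPowerSeries (Fin 2) ℂ)}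

/-! The minors are `2y`, `5y⁴ + x³` and `-6x²y²`, which generate `⟨x³, y⟩` since `2` is invertible.
If `⟨x³, y⟩ = ⟨g⟩`, then `y = b * g` with `g` a non-unit, as the ideal lies in the maximal ideal.
But `y` is irreducible in `k⟦x, y⟧`: it has order `1`, while a product of two non-units has
order at least `2`. So `b` is a unit, `⟨x³, y⟩ = ⟨y⟩`, and yet `y ∤ x³`. -/

namespace MvPowerSeries

variable {σ : Type*}

theorem order_X {R : Type*} [Semiring R] [Nontrivial R] (s : σ) :
    order (X s : MvPowerSeries σ R) = 1 := by
  rw [X, order_monomial_of_ne_zero one_ne_zero, Finsupp.degree_single, Nat.cast_one]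

theorem irreducible_X {k : Type*} [Field k] (s : σ) : Irreducible (X s : MvPowerSeries σ k) := by
  refine ⟨by simp [isUnit_iff_constantCoeff], fun a b hab => ?_⟩
  by_contra! h
  simp only [isUnit_iff_constantCoeff, isUnit_iff_ne_zero, not_not,
    ← one_le_order_iff_constCoeff_eq_zero] at h
  have h2 : (2 : ℕ∞) ≤ 1 := calc
    2 ≤ a.order + b.order := add_le_add h.1 h.2
    _ ≤ (a * b).order := le_order_mul
    _ = 1 := by rw [← hab, order_X]
  norm_num at h2

theorem X_not_dvd_X_pow {R : Type*} [Semiring R] [Nontrivial R] {i j : σ} (hij : i ≠ j)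
    (n : ℕ) : ¬ (X j : MvPowerSeries σ R) ∣ X i ^ n := by
  classical
  rw [X_dvd_iff]
  intro h
  simpa [coeff_X_pow] using h (Finsupp.single i n) (Finsupp.single_eq_of_ne hij.symm)

theorem span_X_pow_X_le_ker_constantCoeff {R : Type*} [CommSemiring R] (i j : σ) {n : ℕ}
    (hn : n ≠ 0) :
    Ideal.span {X i ^ n, X j} ≤ RingHom.ker (constantCoeff : MvPowerSeries σ R →+* R) := by
  simp [Ideal.span_le, Set.insert_subset_iff, hn]

theorem not_isPrincipal_span_X_pow_X {k : Type*} [Field k] {i j : σ} (hij : i ≠ j) {n : ℕ}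
    (hn : n ≠ 0) : ¬ (Ideal.span {X i ^ n, X j} : Ideal (MvPowerSeries σ k)).IsPrincipal := by
  rintro ⟨g, hg⟩
  rw [Ideal.submodule_span_eq] at hg
  obtain ⟨b, hbg⟩ := Ideal.mem_span_singleton'.mp
    (hg ▸ Ideal.subset_span (by simp) : X j ∈ Ideal.span {g})
  have hg_nonunit : ¬ IsUnit g := by
    have hg0 : constantCoeff g = 0 :=
      span_X_pow_X_le_ker_constantCoeff i j hn (hg ▸ Ideal.mem_span_singleton_self g)
    simp [isUnit_iff_constantCoeff, hg0]
  have hb : IsUnit b := ((irreducible_X j).isUnit_or_isUnit hbg.symm).resolve_right hg_nonunit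
  have hspan : Ideal.span {X i ^ n, X j} = Ideal.span {(X j : MvPowerSeries σ k)} := by
    rw [hg, ← hbg, Ideal.span_singleton_mul_left_unit hb]
  apply X_not_dvd_X_pow (R := k) hij n
  rw [← Ideal.mem_span_singleton, ← hspan]
  exact Ideal.subset_span (by simp)

end MvPowerSeries

theorem span_F4_minors {A : Type*} [CommRing A] (h2 : IsUnit (2 : A)) (x y : A) :
    Ideal.span {2 * y, 5 * y ^ 4 + x ^ 3, -6 * x ^ 2 * y ^ 2} = Ideal.span {x ^ 3, y} := by
  apply le_antisymm
  · simp only [Ideal.span_le, Set.insert_subset_iff, Set.singleton_subset_iff, SetLike.mem_coe]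
    exact ⟨Ideal.mem_span_pair.mpr ⟨0, 2, by ring⟩, Ideal.mem_span_pair.mpr ⟨1, 5 * y ^ 3, by ring⟩,
      Ideal.mem_span_pair.mpr ⟨0, -6 * x ^ 2 * y, by ring⟩⟩
  · set I := Ideal.span {2 * y, 5 * y ^ 4 + x ^ 3, -6 * x ^ 2 * y ^ 2}
    have hy : y ∈ I := by
      have := I.mul_mem_left ↑h2.unit⁻¹ (Ideal.subset_span (by simp) : 2 * y ∈ I)
      rwa [← mul_assoc, h2.val_inv_mul, one_mul] at this
    have hx : x ^ 3 ∈ I := by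
      have := I.sub_mem (Ideal.subset_span (by simp) : 5 * y ^ 4 + x ^ 3 ∈ I)
        (I.mul_mem_left (5 * y ^ 3) hy)
      rwa [show 5 * y ^ 4 + x ^ 3 - 5 * y ^ 3 * y = x ^ 3 by ring] at this
    simp only [Ideal.span_le, Set.insert_subset_iff, Set.singleton_subset_iff, SetLike.mem_coe]
    exact ⟨hx, hy⟩

theorem ramIdeal_F4 : ramIdeal ![X 0, (X 1) ^ 2, (X 1) ^ 5 + (X 0) ^ 3 * X 1] =
    Ideal.span {(MvPowerSeries.X 0 ^ 3 : MvPowerSeries (Fin 2) ℂ), MvPowerSeries.X 1} := by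
  have h01 : jacMinor ![X 0, (X 1) ^ 2, (X 1) ^ 5 + (X 0) ^ 3 * X 1] 0 1 = 2 * X 1 := by
    simp [jacMinor]
  have h02 : jacMinor ![X 0, (X 1) ^ 2, (X 1) ^ 5 + (X 0) ^ 3 * X 1] 0 2 =
      5 * X 1 ^ 4 + X 0 ^ 3 := by
    simp [jacMinor]
  have h12 : jacMinor ![X 0, (X 1) ^ 2, (X 1) ^ 5 + (X 0) ^ 3 * X 1] 1 2 =
      -6 * X 0 ^ 2 * X 1 ^ 2 := by
    simp [jacMinor]; ring
  have h2 : IsUnit (2 : MvPowerSeries (Fin 2) ℂ) :=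
    MvPowerSeries.isUnit_iff_constantCoeff.mpr (by rw [map_ofNat]; norm_num)
  simp only [ramIdeal, h01, h02, h12, ← coeToMvPowerSeries.ringHom_apply, map_mul, map_add,
    map_pow, map_neg, map_ofNat]
  simp only [coeToMvPowerSeries.ringHom_apply, coe_X]
  exact span_F4_minors h2 _ _

/-- The `F₄` singularity `f(x,y) = (x, y², y⁵ + x³y)` has ramification ideal
`⟨x³, y⟩`, which is not principal; hence `f` is not a frontal map germ. -/
theorem F4_not_frontal :
    ramIdeal ![X 0, (X 1) ^ 2, (X 1) ^ 5 + (X 0) ^ 3 * X 1]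
        = Ideal.span {((MvPowerSeries.X 0) ^ 3 : MvPowerSeries (Fin 2) ℂ),
            (MvPowerSeries.X 1 : MvPowerSeries (Fin 2) ℂ)} ∧
      ¬ (ramIdeal ![X 0, (X 1) ^ 2, (X 1) ^ 5 + (X 0) ^ 3 * X 1]).IsPrincipal := by
  rw [ramIdeal_F4]
  exact ⟨rfl, MvPowerSeries.not_isPrincipal_span_X_pow_X (by decide) three_ne_zero⟩
end

section
/- Let p = (p₁,…,p_k), q, μ = (μ₁,…,μ_k) be holomorphic functions of (x,y) ∈ ℂ^{n−k}×ℂ^k satisfying ∂q/∂y_ℓ = Σⱼ μⱼ ∂pⱼ/∂y_ℓ for all ℓ, and suppose the k×k matrix ∂μ/∂y is invertible at every point of an open set U. Define h(u,x,y) = (x, u, q(x,y) + Σᵢ μᵢ(x,y)(uᵢ − pᵢ(x,y))) for u ∈ ℂ^k. Then the critical set of h in ℂ^k × U is exactly the graph {(u,x,y) : uᵢ = pᵢ(x,y) for i=1,…,k}, which is a smooth submanifold, and on this set h(p(x,y),x,y) = (x, p(x,y), q(x,y)). -/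
/-!
Since the first components of `h` are `(x, u)`, the differential of `h` at `(u, x, y)` is onto
exactly when the `y`-derivative of its last component `F = q + ∑ μᵢ (uᵢ - pᵢ)` is nonzero.
The relation `∂q/∂y = ∑ μⱼ ∂pⱼ/∂y` cancels the derivatives of `q` and `p`, leaving
`∂F/∂y = ∑ᵢ (uᵢ - pᵢ) ∂μᵢ/∂y`, i.e. the row vector `u - p` times the matrix `∂μ/∂y`;
as that matrix is invertible, this vanishes iff `u = p(x, y)`.
-/
open Function Matrix

section Partial

variable {𝕜 : Type*} [NontriviallyNormedField 𝕜]
  {E F G : Type*} [NormedAddCommGroup E] [NormedSpace 𝕜 E] [NormedAddCommGroup F] [NormedSpace 𝕜 F]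
  [NormedAddCommGroup G] [NormedSpace 𝕜 G]

theorem fderiv_comp_prodMk_apply {g : E × F → G} {x : E} {y : F}
    (hg : DifferentiableAt 𝕜 g (x, y)) (v : F) :
    fderiv 𝕜 (fun y' => g (x, y')) y v = fderiv 𝕜 g (x, y) (0, v) := by
  rw [show (fun y' => g (x, y')) = g ∘ Prod.mk x from rfl,
    fderiv_comp y hg (hasFDerivAt_prodMk_right x y).differentiableAt,
    (hasFDerivAt_prodMk_right x y).fderiv]
  rfl

end Partial

section LinearAlgebra

variable {K : Type*} [Field K]
  {U X Y : Type*} [AddCommGroup U] [Module K U] [AddCommGroup X] [Module K X]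
  [AddCommGroup Y] [Module K Y]

theorem surjective_prodMk_iff (L : U × X × Y →ₗ[K] K) :
    Surjective (fun v : U × X × Y => (v.2.1, v.1, L v)) ↔ ∃ dy, L (0, 0, dy) ≠ 0 := by
  constructor
  · intro hs
    by_contra! h
    obtain ⟨v, hv⟩ := hs (0, 0, 1)
    simp only [Prod.mk.injEq] at hv
    obtain ⟨hx, hu, hL⟩ := hv
    have hv0 : v = (0, 0, v.2.2) := by ext <;> simp [hx, hu]
    rw [hv0, h] at hL
    exact zero_ne_one hL
  · rintro ⟨dy, hdy⟩ ⟨x, u, c⟩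
    refine ⟨(u, x, ((c - L (u, x, 0)) / L (0, 0, dy)) • dy), ?_⟩
    have hsplit : ((u, x, ((c - L (u, x, 0)) / L (0, 0, dy)) • dy) : U × X × Y)
        = (u, x, 0) + ((c - L (u, x, 0)) / L (0, 0, dy)) • (0, 0, dy) := by simp
    simp only [Prod.mk.injEq, true_and]
    rw [hsplit, map_add, map_smul, smul_eq_mul, div_mul_cancel₀ _ hdy]
    ring

variable {k : ℕ}

theorem sum_smul_eq_zero_iff_of_isUnit_det (L : Fin k → (Fin k → K) →ₗ[K] K)
    (hL : IsUnit (Matrix.of fun j l => L j (Pi.single l 1)).det) (c : Fin k → K) :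
    ∑ i, c i • L i = 0 ↔ c = 0 := by
  have hvecMul : ∑ i, c i • L i = 0 ↔ c ᵥ* Matrix.of (fun j l => L j (Pi.single l 1)) = 0 := by
    have hbasis : ∑ i, c i • L i = 0 ↔ ∀ l, (∑ i, c i • L i) (Pi.single l 1) = 0 :=
      ⟨fun h l => by rw [h]; rfl,
        fun h => (Pi.basisFun K (Fin k)).ext fun l => by simpa using h l⟩
    rw [hbasis, funext_iff]
    simp [Matrix.vecMul, dotProduct]
  rw [hvecMul]
  exact (vecMul_injective_of_isUnit ((isUnit_iff_isUnit_det _).2 hL)).eq_iff' (zero_vecMul _)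

end LinearAlgebra

section Critical

variable {𝕜 : Type*} [NontriviallyNormedField 𝕜]
  {U X Y : Type*} [NormedAddCommGroup U] [NormedSpace 𝕜 U] [NormedAddCommGroup X]
  [NormedSpace 𝕜 X] [NormedAddCommGroup Y] [NormedSpace 𝕜 Y]

theorem not_surjective_fderiv_prodMk_iff {F : U × X × Y → 𝕜} {w : U × X × Y}
    (hF : DifferentiableAt 𝕜 F w) :
    ¬ Surjective (fderiv 𝕜 (fun v => (v.2.1, v.1, F v)) w) ↔
      fderiv 𝕜 (fun y => F (w.1, w.2.1, y)) w.2.2 = 0 := by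
  have hderiv : HasFDerivAt (fun v : U × X × Y => (v.2.1, v.1, F v))
      (((ContinuousLinearMap.fst 𝕜 X Y).comp (ContinuousLinearMap.snd 𝕜 U (X × Y))).prod
        ((ContinuousLinearMap.fst 𝕜 U (X × Y)).prod (fderiv 𝕜 F w))) w :=
    (hasFDerivAt_snd.fst).prodMk (hasFDerivAt_fst.prodMk hF.hasFDerivAt)
  have hpartial : DifferentiableAt 𝕜 (fun x => F (w.1, x)) w.2 :=
    hF.comp w.2 (hasFDerivAt_prodMk_right w.1 w.2).differentiableAt
  have hnested : ∀ dy, fderiv 𝕜 (fun y => F (w.1, w.2.1, y)) w.2.2 dy = fderiv 𝕜 F w (0, 0, dy) :=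
    fun dy => by rw [fderiv_comp_prodMk_apply hpartial, fderiv_comp_prodMk_apply hF]
  rw [hderiv.fderiv]
  refine (not_congr (surjective_prodMk_iff (fderiv 𝕜 F w).toLinearMap)).trans ?_
  simp only [not_exists, not_not, ContinuousLinearMap.ext_iff, hnested]
  rfl

end Critical

section GeneratingFunction

variable {𝕜 : Type*} [NontriviallyNormedField 𝕜] {X : Type*} [NormedAddCommGroup X]
  [NormedSpace 𝕜 X] {k : ℕ} (p μ : Fin k → X × (Fin k → 𝕜) → 𝕜) (q : X × (Fin k → 𝕜) → 𝕜)

def generatingFunction (w : (Fin k → 𝕜) × X × (Fin k → 𝕜)) : 𝕜 :=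
  q w.2 + ∑ i, μ i w.2 * (w.1 i - p i w.2)

variable {p μ q} {z : X × (Fin k → 𝕜)}

theorem fderiv_partial_eq_sum_smul (hp : ∀ j, DifferentiableAt 𝕜 (p j) z)
    (hq : DifferentiableAt 𝕜 q z)
    (hform : ∀ l : Fin k, fderiv 𝕜 q z (0, Pi.single l 1)
        = ∑ j, μ j z * fderiv 𝕜 (p j) z (0, Pi.single l 1)) :
    fderiv 𝕜 (fun y => q (z.1, y)) z.2 = ∑ j, μ j z • fderiv 𝕜 (fun y => p j (z.1, y)) z.2 :=
  ContinuousLinearMap.coe_injective <| (Pi.basisFun 𝕜 (Fin k)).ext fun l => by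
    simp [fderiv_comp_prodMk_apply hq, fderiv_comp_prodMk_apply (hp _), hform]

theorem fderiv_generatingFunction_partial (hp : ∀ j, DifferentiableAt 𝕜 (p j) z)
    (hq : DifferentiableAt 𝕜 q z) (hμ : ∀ j, DifferentiableAt 𝕜 (μ j) z)
    (hform : fderiv 𝕜 (fun y => q (z.1, y)) z.2
        = ∑ j, μ j z • fderiv 𝕜 (fun y => p j (z.1, y)) z.2) (u : Fin k → 𝕜) :
    fderiv 𝕜 (fun y => generatingFunction p μ q (u, z.1, y)) z.2
      = ∑ i, (u i - p i z) • fderiv 𝕜 (fun y => μ i (z.1, y)) z.2 := by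
  have hslice : ∀ {g : X × (Fin k → 𝕜) → 𝕜}, DifferentiableAt 𝕜 g z →
      HasFDerivAt (fun y => g (z.1, y)) (fderiv 𝕜 (fun y => g (z.1, y)) z.2) z.2 := fun hg =>
    (hg.comp z.2 (hasFDerivAt_prodMk_right z.1 z.2).differentiableAt).hasFDerivAt
  have hderiv := (hslice hq).fun_add (HasFDerivAt.fun_sum (u := Finset.univ) fun i _ =>
    (hslice (hμ i)).fun_mul ((hslice (hp i)).const_sub (u i)))
  simp only [generatingFunction]
  rw [hderiv.fderiv, hform]
  simp only [smul_neg, Finset.sum_add_distrib, Finset.sum_neg_distrib]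
  abel

theorem not_surjective_fderiv_generatingFunction_iff (hp : ∀ j, DifferentiableAt 𝕜 (p j) z)
    (hq : DifferentiableAt 𝕜 q z) (hμ : ∀ j, DifferentiableAt 𝕜 (μ j) z)
    (hform : ∀ l : Fin k, fderiv 𝕜 q z (0, Pi.single l 1)
        = ∑ j, μ j z * fderiv 𝕜 (p j) z (0, Pi.single l 1))
    (hz : IsUnit (Matrix.of fun j l : Fin k =>
      fderiv 𝕜 (fun y => μ j (z.1, y)) z.2 (Pi.single l 1)).det) (u : Fin k → 𝕜) :
    ¬ Surjective (fderiv 𝕜 (fun w => (w.2.1, w.1, generatingFunction p μ q w)) (u, z)) ↔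
      u = fun i => p i z := by
  have hG : DifferentiableAt 𝕜 (generatingFunction p μ q) (u, z) := by
    unfold generatingFunction
    fun_prop
  rw [not_surjective_fderiv_prodMk_iff hG,
    fderiv_generatingFunction_partial hp hq hμ (fderiv_partial_eq_sum_smul hp hq hform),
    ← ContinuousLinearMap.coe_injective.eq_iff]
  push_cast
  exact (sum_smul_eq_zero_iff_of_isUnit_det _ hz (u - fun i => p i z)).trans sub_eq_zero

end GeneratingFunction

theorem generating_family_critical_set_general (m k : ℕ)
    (p mu : Fin k → ((Fin m → ℂ) × (Fin k → ℂ)) → ℂ)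
    (q : ((Fin m → ℂ) × (Fin k → ℂ)) → ℂ)
    (hp : ∀ j, ContDiff ℂ ⊤ (p j)) (hq : ContDiff ℂ ⊤ q) (hmu : ∀ j, ContDiff ℂ ⊤ (mu j))
    (hform : ∀ z (l : Fin k),
      fderiv ℂ q z (0, Pi.single l 1)
        = ∑ j, mu j z * fderiv ℂ (p j) z (0, Pi.single l 1))
    (U : Set ((Fin m → ℂ) × (Fin k → ℂ)))
    (hU : ∀ z ∈ U, IsUnit (Matrix.of fun j l : Fin k =>
      fderiv ℂ (fun y => mu j (z.1, y)) z.2 (Pi.single l 1)).det)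
    (h : (Fin k → ℂ) × ((Fin m → ℂ) × (Fin k → ℂ)) →
      (Fin m → ℂ) × (Fin k → ℂ) × ℂ)
    (hh : ∀ u z, h (u, z) = (z.1, u, q z + ∑ i, mu i z * (u i - p i z))) :
    {w : (Fin k → ℂ) × ((Fin m → ℂ) × (Fin k → ℂ)) |
        w.2 ∈ U ∧ ¬ Function.Surjective (fderiv ℂ h w)}
      = (fun z => ((fun i => p i z), z)) '' U ∧
    ∀ z, h ((fun i => p i z), z) = (z.1, (fun i => p i z), q z) := by
  have h_eq : h = fun w => (w.2.1, w.1, generatingFunction p mu q w) := funext fun w => hh w.1 w.2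
  have hcrit : ∀ u, ∀ z ∈ U, ¬ Surjective (fderiv ℂ h (u, z)) ↔ u = fun i => p i z :=
    fun u z hz => h_eq ▸ not_surjective_fderiv_generatingFunction_iff
      (fun j => (hp j).differentiable (by simp) z) (hq.differentiable (by simp) z)
      (fun j => (hmu j).differentiable (by simp) z) (hform z) (hU z hz) u
  refine ⟨Set.ext fun ⟨u, z⟩ => ⟨fun ⟨hz, hu⟩ => ⟨z, hz, ?_⟩, ?_⟩, fun z => by simp [hh]⟩
  · rw [(hcrit u z hz).1 hu]
  · rintro ⟨z, hz, hw⟩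
    obtain ⟨rfl, rfl⟩ := Prod.mk.inj hw
    exact ⟨hz, (hcrit _ z hz).2 rfl⟩

/-- Construction of the generating family of a wave front: if
`∂q/∂y_ℓ = Σⱼ μⱼ ∂pⱼ/∂y_ℓ` and the matrix `∂μ/∂y` is invertible on an open set `U`,
then the critical set of `h(u,x,y) = (x, u, q + Σᵢ μᵢ(uᵢ − pᵢ))` in `ℂ^k × U` is
exactly the graph `{u = p(x,y)}` (the image of the smooth map `z ↦ (p(z), z)`),
and on it `h(p(x,y),x,y) = (x, p(x,y), q(x,y))`. -/
theorem generating_family_critical_set (m k : ℕ)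
    (p mu : Fin k → ((Fin m → ℂ) × (Fin k → ℂ)) → ℂ)
    (q : ((Fin m → ℂ) × (Fin k → ℂ)) → ℂ)
    (hp : ∀ j, ContDiff ℂ ⊤ (p j)) (hq : ContDiff ℂ ⊤ q) (hmu : ∀ j, ContDiff ℂ ⊤ (mu j))
    (hform : ∀ z (l : Fin k),
      fderiv ℂ q z (0, Pi.single l 1)
        = ∑ j, mu j z * fderiv ℂ (p j) z (0, Pi.single l 1))
    (U : Set ((Fin m → ℂ) × (Fin k → ℂ))) (hUopen : IsOpen U)
    (hU : ∀ z ∈ U, IsUnit (Matrix.of fun j l : Fin k =>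
      fderiv ℂ (fun y => mu j (z.1, y)) z.2 (Pi.single l 1)).det)
    (h : (Fin k → ℂ) × ((Fin m → ℂ) × (Fin k → ℂ)) →
      (Fin m → ℂ) × (Fin k → ℂ) × ℂ)
    (hh : ∀ u z, h (u, z) = (z.1, u, q z + ∑ i, mu i z * (u i - p i z))) :
    {w : (Fin k → ℂ) × ((Fin m → ℂ) × (Fin k → ℂ)) |
        w.2 ∈ U ∧ ¬ Function.Surjective (fderiv ℂ h w)}
      = (fun z => ((fun i => p i z), z)) '' U ∧
    ∀ z, h ((fun i => p i z), z) = (z.1, (fun i => p i z), q z) :=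
  generating_family_critical_set_general m k p mu q hp hq hmu hform U hU h hh
end
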